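/- Let d ≥ 1 be an integer, V a finite nonempty subset of ℤ^d (with the Euclidean norm ‖·‖ on ℝ^d), and R : V × V → ℂ a unitary matrix satisfying the Lieb–Robinson promise |R(j,k)| ≤ min(1, exp((v·t − ‖j − k‖)/ξ)) for all j,k ∈ V, where v ≥ 0, t ≥ 0, ξ > 0. Let L > 0 and let S ⊆ V satisfy j − k ∈ (2L)·ℤ^d for all j,k ∈ S. Then there exist constants η > 0 and L₀ > 0 depending only on d and ξ such that, if L ≥ L₀ and v·t ≤ L, then for every i ∈ S: Σ_{j ∈ V} Σ_{k ∈ S, k ≠ i} |R(i,j)| · |R(j,k)| ≤ η · L^{d−1} · exp((v·t − L)/ξ). -/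

import Mathlib

open scoped BigOperators

/-- Euclidean norm of a point of the integer lattice `ℤ^d`. -/
noncomputable def euclNormZ {d : ℕ} (x : Fin d → ℤ) : ℝ :=
  Real.sqrt (∑ a, ((x a : ℝ)) ^ 2)

/-!
Write `u = v t ≤ L`, `a = ‖i - j‖`, `b = ‖j - k‖`, `r = ‖i - k‖`. For `k ∈ S ∖ {i}` we have
`r ≥ 2L ≥ 2u` and `r ≤ a + b`, and then the Lieb–Robinson bounds give
`|R i j| |R j k| ≤ e^{(2u - r)/(2ξ)} (e^{-|a - u|/(2ξ)} + e^{-|b - u|/(2ξ)})`.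
Summed over `j`, each term is a sum of `e^{-|‖w‖ - u|/c}` over distinct `w ∈ ℤ^d`, which is
`O((u + 1)^{d-1})`: inside the ball of radius `2u`, `‖w‖` moves at speed at least `1/d` in its
largest coordinate, so each of the `O(u^{d-1})` lines parallel to a coordinate axis contributes
`O(1)`; outside the ball the sum is dominated by `∑ e^{-‖w‖/(2c)} < ∞`.
Finally `i - k = 2L x_k` with distinct nonzero `x_k ∈ ℤ^d`, so for `L ≥ 1`
`e^{(2u - r)/(2ξ)} ≤ e^{(u - L)/ξ} e^{(1 - ‖x_k‖)/ξ}`, and `∑_k e^{-‖x_k‖/ξ}` is bounded.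
-/

open Finset Real

lemma abs_sub_sqrt_sub_le {K x s T : ℝ} (hK : 1 ≤ K) (hx : 0 ≤ x) (hs : 0 ≤ s) (hT : 0 ≤ T)
    (hxs : √(x ^ 2 + s) ≤ K * x) : |x - √(T ^ 2 - s)| ≤ 2 * K * |√(x ^ 2 + s) - T| := by
  set N := √(x ^ 2 + s)
  have hN0 : 0 ≤ N := sqrt_nonneg _
  have hN : N ^ 2 = x ^ 2 + s := sq_sqrt (by positivity)
  rcases le_or_gt s (T ^ 2) with hsT | hsT
  · set μ := √(T ^ 2 - s)
    have hμ0 : 0 ≤ μ := sqrt_nonneg _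
    have hμ : μ ^ 2 = T ^ 2 - s := sq_sqrt (by linarith)
    have hTμ : T ≤ μ + N := by nlinarith
    have hfactor : |x - μ| * (x + μ) = |N - T| * (N + T) := by
      rw [← abs_of_nonneg (by positivity : 0 ≤ x + μ), ← abs_of_nonneg (by positivity : 0 ≤ N + T),
        ← abs_mul, ← abs_mul]
      congr 1; nlinarith
    rcases (add_nonneg hx hμ0).eq_or_lt with h0 | hpos
    · rw [show x - μ = 0 by linarith, abs_zero]
      positivity
    · refine le_of_mul_le_mul_right ?_ hpos
      have hNT : N + T ≤ 2 * K * (x + μ) := by nlinarith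
      calc |x - μ| * (x + μ) = |N - T| * (N + T) := hfactor
        _ ≤ |N - T| * (2 * K * (x + μ)) := by gcongr
        _ = 2 * K * |N - T| * (x + μ) := by ring
  · rw [sqrt_eq_zero_of_nonpos (by linarith), sub_zero, abs_of_nonneg hx]
    have hTN : T < N := by nlinarith
    rw [abs_of_pos (by linarith : 0 < N - T)]
    rcases hx.eq_or_lt with h0 | hpos
    · rw [← h0]; nlinarith
    · refine le_of_mul_le_mul_right ?_ hpos
      nlinarith

lemma min_one_exp_mul_min_one_exp_le {ξ u a b r : ℝ} (hξ : 0 < ξ) (hr : r ≤ a + b)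
    (hu : 2 * u ≤ r) :
    min 1 (exp ((u - a) / ξ)) * min 1 (exp ((u - b) / ξ))
      ≤ exp ((2 * u - r) / (2 * ξ)) * (exp (-|a - u| / (2 * ξ)) + exp (-|b - u| / (2 * ξ))) := by
  have hmin (x : ℝ) : min 1 (exp (x / ξ)) = exp (min 0 x / ξ) := by
    rw [← min_div_div_right hξ.le, zero_div, exp_monotone.map_min, exp_zero]
  have key : 2 * (min 0 (u - a) + min 0 (u - b)) ≤ 2 * u - r - min |a - u| |b - u| := by
    have := min_le_left 0 (u - a); have := min_le_right 0 (u - a)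
    have := min_le_left 0 (u - b); have := min_le_right 0 (u - b)
    have := min_le_left |a - u| |b - u|; have := min_le_right |a - u| |b - u|
    rcases abs_cases (a - u) with ⟨_, _⟩ | ⟨_, _⟩ <;>
      rcases abs_cases (b - u) with ⟨_, _⟩ | ⟨_, _⟩ <;> linarith
  calc min 1 (exp ((u - a) / ξ)) * min 1 (exp ((u - b) / ξ))
      = exp ((2 * (min 0 (u - a) + min 0 (u - b))) / (2 * ξ)) := by
        rw [hmin, hmin, ← exp_add]; congr 1; field_simp
    _ ≤ exp ((2 * u - r - min |a - u| |b - u|) / (2 * ξ)) := by gcongr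
    _ = exp ((2 * u - r) / (2 * ξ)) * exp (-min |a - u| |b - u| / (2 * ξ)) := by
        rw [← exp_add]; congr 1; ring
    _ ≤ exp ((2 * u - r) / (2 * ξ)) * (exp (-|a - u| / (2 * ξ)) + exp (-|b - u| / (2 * ξ))) := by
        gcongr
        rcases min_cases |a - u| |b - u| with ⟨hm, -⟩ | ⟨hm, -⟩ <;> rw [hm]
        · exact le_add_of_nonneg_right (exp_pos _).le
        · exact le_add_of_nonneg_left (exp_pos _).le

lemma summable_pow_natAbs {ρ : ℝ} (h0 : 0 ≤ ρ) (h1 : ρ < 1) :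
    Summable fun m : ℤ => ρ ^ m.natAbs :=
  .of_nat_of_neg (by simpa using summable_geometric_of_lt_one h0 h1)
    (by simpa using summable_geometric_of_lt_one h0 h1)

lemma exists_sum_exp_neg_abs_sub_le {c : ℝ} (hc : 0 < c) :
    ∃ B, ∀ (F : Finset ℤ) (x : ℝ), ∑ m ∈ F, exp (-|m - x| / c) ≤ B := by
  set ρ := exp (-1 / c)
  have hρ : ρ < 1 := exp_lt_one_iff.mpr (div_neg_of_neg_of_pos (by norm_num) hc)
  refine ⟨exp (1 / c) * ∑' m : ℤ, ρ ^ m.natAbs, fun F x => ?_⟩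
  have hsum : Summable fun m : ℤ => ρ ^ (m - ⌊x⌋).natAbs :=
    (summable_pow_natAbs (exp_pos _).le hρ).comp_injective sub_left_injective
  have hpt (m : ℤ) : exp (-|m - x| / c) ≤ exp (1 / c) * ρ ^ (m - ⌊x⌋).natAbs := by
    rw [← exp_nat_mul, ← exp_add, Nat.cast_natAbs, Int.cast_abs, Int.cast_sub]
    gcongr
    have : |x - ⌊x⌋| ≤ 1 := by
      rw [Int.self_sub_floor, abs_of_nonneg (Int.fract_nonneg x)]
      exact (Int.fract_lt_one x).le
    have := abs_sub_le (m : ℝ) x ⌊x⌋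
    rw [div_eq_mul_inv, div_eq_mul_inv, div_eq_mul_inv]
    nlinarith [inv_pos.mpr hc]
  calc ∑ m ∈ F, exp (-|m - x| / c) ≤ ∑ m ∈ F, exp (1 / c) * ρ ^ (m - ⌊x⌋).natAbs :=
        sum_le_sum fun m _ => hpt m
    _ = exp (1 / c) * ∑ m ∈ F, ρ ^ (m - ⌊x⌋).natAbs := (mul_sum ..).symm
    _ ≤ exp (1 / c) * ∑' m : ℤ, ρ ^ (m - ⌊x⌋).natAbs := by
        gcongr; exact hsum.sum_le_tsum F fun _ _ => by positivity
    _ = exp (1 / c) * ∑' m : ℤ, ρ ^ m.natAbs := by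
        congr 1; exact (Equiv.subRight ⌊x⌋).tsum_eq fun m : ℤ => ρ ^ m.natAbs

lemma exists_sum_exp_neg_abs_abs_sub_le {c : ℝ} (hc : 0 < c) :
    ∃ B, ∀ (F : Finset ℤ) (μ : ℝ), ∑ m ∈ F, exp (-|(|(m : ℝ)|) - μ| / c) ≤ B := by
  obtain ⟨B, hB⟩ := exists_sum_exp_neg_abs_sub_le hc
  refine ⟨B + B, fun F μ => ?_⟩
  have hpt (m : ℤ) :
      exp (-|(|(m : ℝ)|) - μ| / c) ≤ exp (-|m - μ| / c) + exp (-|m - -μ| / c) := by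
    rcases abs_cases (m : ℝ) with ⟨h, -⟩ | ⟨h, -⟩
    · rw [h]; exact le_add_of_nonneg_right (exp_pos _).le
    · rw [h, show -(m : ℝ) - μ = -(m - -μ) by ring, abs_neg]
      exact le_add_of_nonneg_left (exp_pos _).le
  calc _ ≤ ∑ m ∈ F, (exp (-|m - μ| / c) + exp (-|m - -μ| / c)) := sum_le_sum fun m _ => hpt m
    _ ≤ B + B := by rw [sum_add_distrib]; exact add_le_add (hB F μ) (hB F (-μ))

lemma sum_prod_le_pow {ι α : Type*} [Fintype ι] [DecidableEq ι] [DecidableEq α] {g : α → ℝ}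
    (hg : ∀ m, 0 ≤ g m) {B : ℝ} (hB : ∀ E : Finset α, ∑ m ∈ E, g m ≤ B) (F : Finset (ι → α)) :
    ∑ w ∈ F, ∏ i, g (w i) ≤ B ^ Fintype.card ι :=
  calc ∑ w ∈ F, ∏ i, g (w i) ≤ ∑ w ∈ Fintype.piFinset fun i => F.image (· i), ∏ i, g (w i) :=
        sum_le_sum_of_subset_of_nonneg
          (fun w hw => Fintype.mem_piFinset.mpr fun i => mem_image_of_mem _ hw)
          (fun _ _ _ => prod_nonneg fun _ _ => hg _)
    _ = ∏ i, ∑ m ∈ F.image (· i), g m := (prod_univ_sum _ _).symm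
    _ ≤ ∏ _i : ι, B := prod_le_prod (fun _ _ => sum_nonneg fun _ _ => hg _) fun i _ => hB _
    _ = B ^ Fintype.card ι := by simp

lemma sum_le_card_image_mul {ι κ : Type*} [DecidableEq κ] (s : Finset ι) (p : ι → κ)
    {f : ι → ℝ} {B : ℝ} (h : ∀ y, ∑ x ∈ s with p x = y, f x ≤ B) :
    ∑ x ∈ s, f x ≤ #(s.image p) * B := by
  rw [← sum_fiberwise_of_maps_to fun x hx => mem_image_of_mem p hx]
  simpa using sum_le_card_nsmul _ _ _ fun y _ => h y

section

variable {d : ℕ}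

lemma euclNormZ_nonneg (x : Fin d → ℤ) : 0 ≤ euclNormZ x := sqrt_nonneg _

@[simp] lemma euclNormZ_zero : euclNormZ (0 : Fin d → ℤ) = 0 := by simp [euclNormZ]

lemma euclNormZ_eq_norm (x : Fin d → ℤ) :
    euclNormZ x = ‖(WithLp.toLp 2 fun a => (x a : ℝ) : EuclideanSpace ℝ (Fin d))‖ := by
  simp [euclNormZ, EuclideanSpace.norm_eq]

lemma euclNormZ_sub_le (x y z : Fin d → ℤ) :
    euclNormZ (x - z) ≤ euclNormZ (x - y) + euclNormZ (y - z) := by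
  simp only [euclNormZ_eq_norm]
  refine le_of_eq_of_le ?_ (norm_add_le _ _)
  congr 1; ext a; simp

lemma abs_le_euclNormZ (x : Fin d → ℤ) (a : Fin d) : |(x a : ℝ)| ≤ euclNormZ x := by
  rw [← sqrt_sq_eq_abs]
  exact sqrt_le_sqrt (single_le_sum (f := fun b => ((x b : ℝ)) ^ 2)
    (fun _ _ => sq_nonneg _) (mem_univ a))

lemma one_le_euclNormZ {x : Fin d → ℤ} (hx : x ≠ 0) : 1 ≤ euclNormZ x := by
  obtain ⟨a, ha⟩ := Function.ne_iff.mp hx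
  calc (1 : ℝ) ≤ |(x a : ℝ)| := by exact_mod_cast Int.one_le_abs ha
    _ ≤ euclNormZ x := abs_le_euclNormZ x a

lemma euclNormZ_eq_mul {c : ℝ} (hc : 0 ≤ c) {x y : Fin d → ℤ} (h : ∀ a, (x a : ℝ) = c * y a) :
    euclNormZ x = c * euclNormZ y := by
  simp only [euclNormZ, h, mul_pow, ← mul_sum]
  rw [sqrt_mul (sq_nonneg c), sqrt_sq hc]

lemma sum_abs_le_mul_euclNormZ (x : Fin d → ℤ) : ∑ a, |(x a : ℝ)| ≤ d * euclNormZ x := by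
  simpa using sum_le_sum fun a (_ : a ∈ univ) => abs_le_euclNormZ x a

lemma euclNormZ_sq_eq (x : Fin d → ℤ) (a : Fin d) :
    euclNormZ x ^ 2 = (x a : ℝ) ^ 2 + euclNormZ (Function.update x a 0) ^ 2 := by
  simp only [euclNormZ, sq_sqrt (sum_nonneg fun _ _ => sq_nonneg _)]
  rw [← add_sum_erase _ _ (mem_univ a), ← add_sum_erase _ _ (mem_univ a)]
  simp only [Function.update_self, Int.cast_zero, zero_pow two_ne_zero, zero_add]
  congr 1
  exact sum_congr rfl fun b hb => by rw [Function.update_of_ne (ne_of_mem_erase hb)]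

lemma euclNormZ_le_mul_abs {x : Fin d → ℤ} {a : Fin d} (h : ∀ b, |x b| ≤ |x a|) :
    euclNormZ x ≤ d * |(x a : ℝ)| := by
  rw [← sqrt_sq (by positivity : (0 : ℝ) ≤ d * |(x a : ℝ)|)]
  apply sqrt_le_sqrt
  have hd : (d : ℝ) ≤ d ^ 2 := by exact_mod_cast Nat.le_self_pow two_ne_zero d
  calc ∑ b, ((x b : ℝ)) ^ 2 ≤ ∑ _b : Fin d, ((x a : ℝ)) ^ 2 :=
        sum_le_sum fun b _ => by
          rw [← sq_abs, ← sq_abs (x a : ℝ)]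
          exact pow_le_pow_left₀ (abs_nonneg _) (by exact_mod_cast h b) 2
    _ ≤ (d * |(x a : ℝ)|) ^ 2 := by
        rw [sum_const, card_univ, Fintype.card_fin, nsmul_eq_mul, mul_pow, sq_abs]
        exact mul_le_mul_of_nonneg_right hd (sq_nonneg _)

lemma exists_sum_exp_neg_euclNormZ_le {c : ℝ} (hc : 0 < c) :
    ∃ B, ∀ F : Finset (Fin d → ℤ), ∑ w ∈ F, exp (-euclNormZ w / c) ≤ B := by
  have hc' : 0 < (d + 1) * c := by positivity
  obtain ⟨B, hB⟩ := exists_sum_exp_neg_abs_sub_le hc'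
  refine ⟨B ^ d, fun F => ?_⟩
  have hpt (w : Fin d → ℤ) :
      exp (-euclNormZ w / c) ≤ ∏ a, exp (-|(w a : ℝ) - 0| / ((d + 1) * c)) := by
    rw [← exp_sum]
    gcongr
    simp only [sub_zero, neg_div, sum_neg_distrib, ← sum_div, neg_le_neg_iff]
    rw [div_le_div_iff₀ hc' hc]
    nlinarith [sum_abs_le_mul_euclNormZ w, euclNormZ_nonneg w]
  calc ∑ w ∈ F, exp (-euclNormZ w / c)
      ≤ ∑ w ∈ F, ∏ a, exp (-|(w a : ℝ) - 0| / ((d + 1) * c)) := sum_le_sum fun w _ => hpt w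
    _ ≤ B ^ d := by
      simpa using sum_prod_le_pow (fun _ => (exp_pos _).le) (fun E => hB E 0) F

/-- `√(T ^ 2 - ‖w - w a • e_a‖ ^ 2)` is the value of `|w a|` for which `‖w‖ = T` (junk `0` if
there is none); the bound comes from a coordinate `a` of largest modulus. -/
lemma exp_neg_abs_euclNormZ_sub_le_sum (hd : 0 < d) {c T : ℝ} (hc : 0 < c) (hT : 0 ≤ T)
    (w : Fin d → ℤ) :
    exp (-|euclNormZ w - T| / c) ≤ ∑ a, exp (-|(|(w a : ℝ)|)
      - √(T ^ 2 - euclNormZ (Function.update w a 0) ^ 2)| / (2 * d * c)) := by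
  have : Nonempty (Fin d) := ⟨⟨0, hd⟩⟩
  obtain ⟨a, -, ha⟩ := exists_max_image univ (fun a => |w a|) univ_nonempty
  refine le_trans ?_ (single_le_sum (fun b _ => (exp_pos _).le) (mem_univ a))
  have hnorm : √(|(w a : ℝ)| ^ 2 + euclNormZ (Function.update w a 0) ^ 2) = euclNormZ w := by
    rw [sq_abs, ← euclNormZ_sq_eq, sqrt_sq (euclNormZ_nonneg w)]
  have key := abs_sub_sqrt_sub_le (K := d) (by exact_mod_cast hd) (abs_nonneg _) (sq_nonneg _)
    hT (hnorm ▸ euclNormZ_le_mul_abs fun b => ha b (mem_univ b))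
  rw [hnorm] at key
  refine exp_le_exp.mpr ?_
  rw [neg_div, neg_div, neg_le_neg_iff, div_le_div_iff₀ (by positivity) hc]
  nlinarith

lemma sum_le_card_image_update_mul {f : ℤ → (Fin d → ℤ) → ℝ} {B : ℝ}
    (hB : ∀ (E : Finset ℤ) (v : Fin d → ℤ), ∑ m ∈ E, f m v ≤ B) (G : Finset (Fin d → ℤ))
    (a : Fin d) :
    ∑ w ∈ G, f (w a) (Function.update w a 0) ≤ #(G.image (Function.update · a 0)) * B := by
  refine sum_le_card_image_mul G _ fun v => ?_
  have hinj : Set.InjOn (· a) (G.filter (Function.update · a 0 = v) : Set (Fin d → ℤ)) := by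
    intro w₁ h₁ w₂ h₂ (h : w₁ a = w₂ a)
    have hv := (mem_filter.mp h₁).2.trans (mem_filter.mp h₂).2.symm
    funext b
    by_cases hb : b = a
    · rw [hb, h]
    · simpa [Function.update_of_ne hb] using congrFun hv b
  calc _ = ∑ w ∈ G with Function.update w a 0 = v, f (w a) v :=
        sum_congr rfl fun w hw => by rw [(mem_filter.mp hw).2]
    _ = ∑ m ∈ (G.filter (Function.update · a 0 = v)).image (· a), f m v :=
        (sum_image (f := (f · v)) hinj).symm
    _ ≤ B := hB _ _

lemma card_image_update_le {M : ℕ} {G : Finset (Fin d → ℤ)}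
    (hG : ∀ w ∈ G, ∀ b, (w b).natAbs ≤ M) (a : Fin d) :
    #(G.image (Function.update · a 0)) ≤ (2 * M + 1) ^ (d - 1) := by
  calc #(G.image (Function.update · a 0))
      ≤ #(Fintype.piFinset fun b => if b = a then {0} else Icc (-(M : ℤ)) M) := by
        refine card_le_card fun v hv => ?_
        obtain ⟨w, hw, rfl⟩ := mem_image.mp hv
        refine Fintype.mem_piFinset.mpr fun b => ?_
        by_cases hb : b = a
        · simp [hb]
        · have := hG w hw b
          simp only [hb, if_false, Function.update_of_ne hb, mem_Icc]
          omega
    _ = (2 * M + 1) ^ (d - 1) := by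
        rw [Fintype.card_piFinset, ← mul_prod_erase univ _ (mem_univ a), if_pos rfl,
          card_singleton, one_mul, prod_congr rfl fun b hb => by
            rw [if_neg (ne_of_mem_erase hb)], Int.card_Icc, prod_const,
          card_erase_of_mem (mem_univ a), card_univ, Fintype.card_fin]
        congr 1
        omega

lemma sum_exp_neg_abs_euclNormZ_sub_le_of_le (hd : 0 < d) {c T B : ℝ} (hc : 0 < c)
    (hT : 0 ≤ T)
    (hB : ∀ (F : Finset ℤ) (μ : ℝ), ∑ m ∈ F, exp (-|(|(m : ℝ)|) - μ| / (2 * d * c)) ≤ B)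
    {G : Finset (Fin d → ℤ)} (hG : ∀ w ∈ G, euclNormZ w ≤ 2 * T) :
    ∑ w ∈ G, exp (-|euclNormZ w - T| / c) ≤ d * (4 * T + 1) ^ (d - 1) * B := by
  have hB0 : 0 ≤ B := by simpa using hB ∅ 0
  set M := ⌊2 * T⌋₊
  have hM (w) (hw : w ∈ G) (b) : (w b).natAbs ≤ M := Nat.le_floor <| by
    rw [Nat.cast_natAbs, Int.cast_abs]; exact (abs_le_euclNormZ w b).trans (hG w hw)
  have hcard (a : Fin d) :
      (#(G.image (Function.update · a 0)) : ℝ) ≤ (4 * T + 1) ^ (d - 1) := by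
    have : (M : ℝ) ≤ 2 * T := Nat.floor_le (by positivity)
    calc (#(G.image (Function.update · a 0)) : ℝ) ≤ ((2 * M + 1) ^ (d - 1) : ℕ) := by
          exact_mod_cast card_image_update_le hM a
      _ ≤ (4 * T + 1) ^ (d - 1) := by
          push_cast; exact pow_le_pow_left₀ (by positivity) (by linarith) _
  calc ∑ w ∈ G, exp (-|euclNormZ w - T| / c)
      ≤ ∑ w ∈ G, ∑ a, exp (-|(|(w a : ℝ)|)
          - √(T ^ 2 - euclNormZ (Function.update w a 0) ^ 2)| / (2 * d * c)) :=
        sum_le_sum fun w _ => exp_neg_abs_euclNormZ_sub_le_sum hd hc hT w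
    _ = ∑ a, ∑ w ∈ G, exp (-|(|(w a : ℝ)|)
          - √(T ^ 2 - euclNormZ (Function.update w a 0) ^ 2)| / (2 * d * c)) := sum_comm
    _ ≤ ∑ _a : Fin d, (4 * T + 1) ^ (d - 1) * B := sum_le_sum fun a _ =>
        (sum_le_card_image_update_mul (f := fun m v =>
          exp (-|(|(m : ℝ)|) - √(T ^ 2 - euclNormZ v ^ 2)| / (2 * d * c)))
          (fun E _ => hB E _) G a).trans (mul_le_mul_of_nonneg_right (hcard a) hB0)
    _ = d * (4 * T + 1) ^ (d - 1) * B := by simp [mul_assoc]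

lemma exists_sum_exp_neg_abs_euclNormZ_sub_le (hd : 0 < d) {c : ℝ} (hc : 0 < c) :
    ∃ A, ∀ T, 0 ≤ T → ∀ F : Finset (Fin d → ℤ),
      ∑ w ∈ F, exp (-|euclNormZ w - T| / c) ≤ A * (T + 1) ^ (d - 1) := by
  obtain ⟨B, hB⟩ := exists_sum_exp_neg_abs_abs_sub_le (by positivity : 0 < 2 * d * c)
  obtain ⟨B', hB'⟩ := exists_sum_exp_neg_euclNormZ_le (d := d) (by positivity : 0 < 2 * c)
  have hB0 : 0 ≤ B := by simpa using hB ∅ 0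
  have hB'0 : 0 ≤ B' := by simpa using hB' ∅
  refine ⟨d * 4 ^ (d - 1) * B + B', fun T hT F => ?_⟩
  rw [← sum_filter_add_sum_filter_not F fun w => euclNormZ w ≤ 2 * T]
  have hnear := sum_exp_neg_abs_euclNormZ_sub_le_of_le hd hc hT hB (G := F.filter _)
    fun w hw => (mem_filter.mp hw).2
  have hfar : ∑ w ∈ F with ¬euclNormZ w ≤ 2 * T, exp (-|euclNormZ w - T| / c) ≤ B' := by
    refine le_trans (sum_le_sum fun w hw => exp_le_exp.mpr ?_) (hB' _)
    have := (mem_filter.mp hw).2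
    rw [abs_of_pos (by linarith), neg_div, neg_div, neg_le_neg_iff,
      div_le_div_iff₀ (by positivity) hc]
    nlinarith
  have hpow : (4 * T + 1) ^ (d - 1) ≤ 4 ^ (d - 1) * (T + 1) ^ (d - 1) := by
    rw [← mul_pow]; gcongr; linarith
  calc _ ≤ d * (4 * T + 1) ^ (d - 1) * B + B' := add_le_add hnear hfar
    _ ≤ d * (4 ^ (d - 1) * (T + 1) ^ (d - 1)) * B + B' * (T + 1) ^ (d - 1) := by
        gcongr; exact le_mul_of_one_le_right hB'0 (one_le_pow₀ (by linarith))
    _ = (d * 4 ^ (d - 1) * B + B') * (T + 1) ^ (d - 1) := by ring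

lemma sum_norm_mul_norm_le {ι : Type*} [Fintype ι] {p : ι → Fin d → ℤ}
    (hp : Function.Injective p) {R : Matrix ι ι ℂ} {u ξ A : ℝ} (hξ : 0 < ξ)
    (hR : ∀ j k, ‖R j k‖ ≤ min 1 (exp ((u - euclNormZ (p j - p k)) / ξ)))
    (hA : ∀ F : Finset (Fin d → ℤ), ∑ w ∈ F, exp (-|euclNormZ w - u| / (2 * ξ)) ≤ A)
    {i k : ι} (hik : 2 * u ≤ euclNormZ (p i - p k)) :
    ∑ j, ‖R i j‖ * ‖R j k‖ ≤ exp ((2 * u - euclNormZ (p i - p k)) / (2 * ξ)) * (2 * A) := by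
  classical
  have hshell {φ : ι → Fin d → ℤ} (hφ : Function.Injective φ) :
      ∑ j, exp (-|euclNormZ (φ j) - u| / (2 * ξ)) ≤ A := by
    have := hA (univ.image φ)
    rwa [sum_image hφ.injOn] at this
  calc ∑ j, ‖R i j‖ * ‖R j k‖
      ≤ ∑ j, exp ((2 * u - euclNormZ (p i - p k)) / (2 * ξ))
          * (exp (-|euclNormZ (p i - p j) - u| / (2 * ξ))
            + exp (-|euclNormZ (p j - p k) - u| / (2 * ξ))) :=
        sum_le_sum fun j _ => (mul_le_mul (hR i j) (hR j k) (norm_nonneg _)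
          (le_min zero_le_one (exp_pos _).le)).trans
            (min_one_exp_mul_min_one_exp_le hξ (euclNormZ_sub_le _ _ _) hik)
    _ ≤ exp ((2 * u - euclNormZ (p i - p k)) / (2 * ξ)) * (A + A) := by
        rw [← mul_sum, sum_add_distrib]
        gcongr
        · exact hshell (sub_right_injective.comp hp)
        · exact hshell (sub_left_injective.comp hp)
    _ = _ := by ring

lemma exists_injOn_euclNormZ_sub_eq_mul {ι : Type*} [DecidableEq ι] {p : ι → Fin d → ℤ}
    (hp : Function.Injective p) {S : Finset ι} {L : ℝ} (hL : 0 < L)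
    (hS : ∀ j ∈ S, ∀ k ∈ S, ∃ x : Fin d → ℤ, ∀ a, ((p j a : ℝ) - (p k a : ℝ)) = 2 * L * x a)
    {i : ι} (hi : i ∈ S) :
    ∃ x : ι → Fin d → ℤ, Set.InjOn x (S.erase i) ∧
      ∀ k ∈ S.erase i, 1 ≤ euclNormZ (x k) ∧ euclNormZ (p i - p k) = 2 * L * euclNormZ (x k) := by
  choose! x hx using hS i hi
  have hinj : Set.InjOn x S := fun k₁ h₁ k₂ h₂ h => hp <| funext fun a => by
    have h₁ := hx k₁ h₁ a
    have h₂ := hx k₂ h₂ a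
    rw [h] at h₁
    exact_mod_cast (by linarith : (p k₁ a : ℝ) = p k₂ a)
  have hxi : x i = 0 := funext fun a => by simpa [hL.ne'] using (hx i hi a).symm
  refine ⟨x, hinj.mono (erase_subset i S), fun k hk => ⟨one_le_euclNormZ fun h0 =>
    ne_of_mem_erase hk (hinj (mem_of_mem_erase hk) hi (h0.trans hxi.symm)),
    euclNormZ_eq_mul (by positivity) fun a => ?_⟩⟩
  rw [Pi.sub_apply, Int.cast_sub]
  exact hx k (mem_of_mem_erase hk) a

end

/-- Lemma S2: the interference quantity `C_i = Σ_j Σ_{k∈S, k≠i} |R_{i,j}||R_{j,k}|`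
is bounded by `η L^{d−1} e^{(vt−L)/ξ}`. -/
theorem stmt6 (d : ℕ) (hd : 1 ≤ d) (ξ : ℝ) (hξ : 0 < ξ) :
    ∃ η : ℝ, 0 < η ∧ ∃ L₀ : ℝ, 0 < L₀ ∧
      ∀ (V : Finset (Fin d → ℤ)), V.Nonempty →
      ∀ R : Matrix ↥V ↥V ℂ, R ∈ Matrix.unitaryGroup ↥V ℂ →
      ∀ v t L : ℝ, 0 ≤ v → 0 ≤ t → 0 < L →
      (∀ j k : ↥V, ‖R j k‖ ≤
        min 1 (Real.exp ((v * t - euclNormZ ((j : Fin d → ℤ) - (k : Fin d → ℤ))) / ξ))) →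
      ∀ S : Finset ↥V,
      (∀ j ∈ S, ∀ k ∈ S, ∃ x : Fin d → ℤ, ∀ a : Fin d,
        (((j : Fin d → ℤ) a : ℝ) - ((k : Fin d → ℤ) a : ℝ)) = 2 * L * (x a : ℝ)) →
      L₀ ≤ L → v * t ≤ L →
      ∀ i ∈ S,
        ∑ j : ↥V, ∑ k ∈ S.erase i, ‖R i j‖ * ‖R j k‖
          ≤ η * L ^ (d - 1) * Real.exp ((v * t - L) / ξ) := by
  obtain ⟨A, hA⟩ := exists_sum_exp_neg_abs_euclNormZ_sub_le hd (by positivity : 0 < 2 * ξ)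
  obtain ⟨B, hB⟩ := exists_sum_exp_neg_euclNormZ_le (d := d) hξ
  have hA1 : 1 ≤ A := by simpa using hA 0 le_rfl {0}
  have hB1 : 1 ≤ B := by simpa using hB {0}
  refine ⟨exp (1 / ξ) * B * (2 * (A * 2 ^ (d - 1))), by positivity, 1, one_pos, ?_⟩
  intro V _ R _ v t L hv ht hL hR S hS hL1 hvtL i hi
  have hu : 0 ≤ v * t := mul_nonneg hv ht
  obtain ⟨x, hinj, hx⟩ := exists_injOn_euclNormZ_sub_eq_mul Subtype.val_injective hL hS hi
  set C := exp ((v * t - L) / ξ) * exp (1 / ξ) * (2 * (A * (v * t + 1) ^ (d - 1))) with hC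
  have hrow (k) (hk : k ∈ S.erase i) :
      ∑ j, ‖R i j‖ * ‖R j k‖ ≤ C * exp (-euclNormZ (x k) / ξ) := by
    obtain ⟨hx1, hr⟩ := hx k hk
    refine (sum_norm_mul_norm_le Subtype.val_injective hξ hR (hA _ hu)
      (by rw [hr]; nlinarith)).trans ?_
    rw [mul_right_comm, ← exp_add, ← exp_add]
    gcongr
    rw [hr, ← add_div, ← add_div, div_le_div_iff₀ (by positivity) hξ]
    nlinarith [mul_nonneg (mul_nonneg (sub_nonneg.mpr hL1) (sub_nonneg.mpr hx1)) hξ.le]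
  calc ∑ j, ∑ k ∈ S.erase i, ‖R i j‖ * ‖R j k‖
      = ∑ k ∈ S.erase i, ∑ j, ‖R i j‖ * ‖R j k‖ := sum_comm
    _ ≤ C * ∑ y ∈ (S.erase i).image x, exp (-euclNormZ y / ξ) := by
        rw [sum_image hinj, mul_sum]; exact sum_le_sum hrow
    _ ≤ exp ((v * t - L) / ξ) * exp (1 / ξ) * (2 * (A * (2 * L) ^ (d - 1))) * B := by
        rw [hC]
        gcongr
        · linarith
        · exact hB _
    _ = exp (1 / ξ) * B * (2 * (A * 2 ^ (d - 1))) * L ^ (d - 1) * exp ((v * t - L) / ξ) := by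
        ring
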